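/- Two probability distributions π and π' on the path set 𝒫 of a directed acyclic graph are path decompositions of the same quasi-flow if and only if there exists a finite sequence of Ryser swaps R_1, …, R_m and positive coefficients c_1, …, c_m > 0 such that π + Σ_i c_i R_i = π'. -/

import Mathlib

open scoped Classical

namespace StmtDAG

variable {N E : Type*} [Fintype N] [Fintype E] [DecidableEq N] [DecidableEq E]

/-- `(src, tgt, s, t)` describes a directed acyclic graph with finite node type `N` and
finite edge type `E` (parallel edges are allowed, since `E` is an abstract type with
endpoint maps): there is no directed cycle, `s` is the unique node with no incoming edge
(the source), and `t` is the unique node with no outgoing edge (the sink). -/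
def IsDAG (src tgt : E → N) (s t : N) : Prop :=
  (∀ a : N, ¬ Relation.TransGen (fun a b => ∃ e, src e = a ∧ tgt e = b) a a) ∧
  (∀ e, tgt e ≠ s) ∧ (∀ e, src e ≠ t) ∧
  (∀ n, (∀ e, tgt e ≠ n) → n = s) ∧
  (∀ n, (∀ e, src e ≠ n) → n = t)

variable (src tgt : E → N) (s t : N)

/-- A path from `s` to `t`: a nonempty list of consecutive edges starting at `s` and
ending at `t`.  (In a DAG these are in bijective correspondence with the edge *sets* in
which `s` and `t` each appear exactly once and every other node appearing at all appears
exactly once as a head and once as a tail.) -/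
structure GPath where
  /-- the edges of the path, in order from the source to the sink -/
  edges : List E
  ne : edges ≠ []
  chain : edges.Chain' fun e f => tgt e = src f
  first : src (edges.head ne) = s
  last : tgt (edges.getLast ne) = t

/-- A quasi-flow: a nonnegative edge weighting such that, at every node other than the
source and the sink, total in-flow equals total out-flow. -/
def IsQuasiFlow (f : E → ℝ) : Prop :=
  (∀ e, 0 ≤ f e) ∧
  ∀ n : N, n ≠ s → n ≠ t →
    (∑ e : E, if tgt e = n then f e else 0) = (∑ e : E, if src e = n then f e else 0)

/-- `π` is a path decomposition of the quasi-flow `f`: a nonnegative weighting of paths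
whose induced edge weights recover `f`. -/
def IsPathDecomp (f : E → ℝ) (π : GPath src tgt s t → ℝ) : Prop :=
  (∀ P, 0 ≤ π P) ∧
  ∀ e : E, f e = ∑ᶠ P : GPath src tgt s t, if e ∈ P.edges then π P else 0

/-- `P.edges = a ++ b`, split exactly at the node `n`. -/
def SplitsAt (P : GPath src tgt s t) (n : N) (a b : List E) : Prop :=
  P.edges = a ++ b ∧ (∀ h : b ≠ [], src (b.head h) = n) ∧ (b = [] → n = t)

/-- `(Q₁, Q₂)` are the `n`-conjugates of the pair `(P₁, P₂)`, both of which pass through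
the node `n`: `Q₁` follows `P₁` up to `n` and `P₂` thereafter, and vice versa. -/
def IsConjAt (n : N) (P₁ P₂ Q₁ Q₂ : GPath src tgt s t) : Prop :=
  ∃ a₁ b₁ a₂ b₂ : List E,
    SplitsAt src tgt s t P₁ n a₁ b₁ ∧ SplitsAt src tgt s t P₂ n a₂ b₂ ∧
    Q₁.edges = a₁ ++ b₂ ∧ Q₂.edges = a₂ ++ b₁

/-- The indicator (point mass) vector of a path. -/
noncomputable def indP (P₀ : GPath src tgt s t) : GPath src tgt s t → ℝ :=
  fun P => if P = P₀ then 1 else 0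

/-- A Ryser swap: `1_{Q₁} + 1_{Q₂} - 1_{P₁} - 1_{P₂}` where `(Q₁, Q₂)` are the
`n`-conjugates of a pair `(P₁, P₂)` compatible at some node `n`. -/
def IsRyserSwap (R : GPath src tgt s t → ℝ) : Prop :=
  ∃ (n : N) (P₁ P₂ Q₁ Q₂ : GPath src tgt s t),
    IsConjAt src tgt s t n P₁ P₂ Q₁ Q₂ ∧
    R = indP src tgt s t Q₁ + indP src tgt s t Q₂ -
          indP src tgt s t P₁ - indP src tgt s t P₂

/-- The Ryser subspace: the linear span of all Ryser swaps. -/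
noncomputable def RyserSub : Submodule ℝ (GPath src tgt s t → ℝ) :=
  Submodule.span ℝ {R | IsRyserSwap src tgt s t R}

/-- `π` is a probability distribution on the path set. -/
def IsDistP (π : GPath src tgt s t → ℝ) : Prop :=
  (∀ P, 0 ≤ π P) ∧ ∑ᶠ P : GPath src tgt s t, π P = 1


end StmtDAG

/-!
Two path decompositions induce the same quasi-flow exactly when they have the same edge loads
`e ↦ ∑ P, w P * (number of times P uses e)` (in a DAG a path uses an edge at most once), and
swaps preserve edge loads. For the converse, fix walks `pre n : s → n` and `suf n : n → t`.
Replacing the prefix `pre (tgt e)` of a path `pre (tgt e) ++ b` by `pre (src e) ++ [e]` changes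
its indicator, up to a swap at `tgt e`, by a vector `D e` independent of `b`; hence
`1_P ≡ 1_{P₀} + ∑_{e ∈ P} D e` modulo swaps. Against a `δ` with zero loads the `D e` terms
cancel, and so does the `P₀` term, because the total mass of `δ` is its load on the edges
leaving `s`. As the swaps are closed under negation, their span consists of their positive
combinations.
-/

namespace StmtDAG

open Relation

section Walks

variable {N E : Type*}

def IsWalk (src tgt : E → N) : N → List E → N → Prop
  | u, [], v => u = v
  | u, e :: l, v => src e = u ∧ IsWalk src tgt (tgt e) l v

def Adj (src tgt : E → N) (a b : N) : Prop := ∃ e, src e = a ∧ tgt e = b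

variable {src tgt : E → N}

theorem IsWalk.append {b : List E} {w : N} :
    ∀ {a : List E} {u v : N}, IsWalk src tgt u a v → IsWalk src tgt v b w →
      IsWalk src tgt u (a ++ b) w
  | [], _, _, huv, hb => by subst huv; exact hb
  | _ :: _, _, _, ⟨he, ha⟩, hb => ⟨he, ha.append hb⟩

theorem IsWalk.ne_nil {l : List E} {u v : N} (h : IsWalk src tgt u l v) (huv : u ≠ v) :
    l ≠ [] := by
  rintro rfl
  exact huv h

theorem IsWalk.eq_nil {l : List E} {u v : N} (h : IsWalk src tgt u l v)
    (hv : ∀ e, tgt e ≠ v) : l = [] := by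
  induction l generalizing u with
  | nil => rfl
  | cons e l ih =>
    cases ih h.2
    exact absurd h.2 (hv e)

theorem isWalk_iff_isChain {l : List E} (hl : l ≠ []) {u v : N} :
    IsWalk src tgt u l v ↔ l.IsChain (fun e f => tgt e = src f) ∧
      src (l.head hl) = u ∧ tgt (l.getLast hl) = v := by
  induction l generalizing u with
  | nil => exact absurd rfl hl
  | cons e l ih =>
    rcases l with _ | ⟨f, l⟩
    · simp [IsWalk]
    · rw [IsWalk, ih (List.cons_ne_nil f l), List.isChain_cons_cons]
      simp only [List.head_cons, List.getLast_cons_cons]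
      tauto

theorem IsWalk.sum_map_sub {M : Type*} [AddCommGroup M] (g : N → M) {l : List E} {u v : N}
    (h : IsWalk src tgt u l v) : (l.map fun e => g (tgt e) - g (src e)).sum = g v - g u := by
  induction l generalizing u with
  | nil => rw [h]; simp
  | cons e l ih =>
    obtain ⟨rfl, h⟩ := h
    rw [List.map_cons, List.sum_cons, ih h]
    abel

theorem IsWalk.reflTransGen_src {l : List E} {u v : N} (h : IsWalk src tgt u l v) {e : E}
    (he : e ∈ l) : ReflTransGen (Adj src tgt) u (src e) := by
  induction l generalizing u with
  | nil => simp at he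
  | cons f l ih =>
    obtain ⟨rfl, h⟩ := h
    rcases List.mem_cons.1 he with rfl | he
    · exact .refl
    · exact .head ⟨f, rfl, rfl⟩ (ih h he)

theorem IsWalk.nodup (hacyc : ∀ a, ¬ TransGen (Adj src tgt) a a) {l : List E} {u v : N}
    (h : IsWalk src tgt u l v) : l.Nodup := by
  induction l generalizing u with
  | nil => exact List.nodup_nil
  | cons e l ih =>
    refine List.nodup_cons.2 ⟨fun he => ?_, ih h.2⟩
    exact hacyc (src e) (.head' ⟨e, rfl, rfl⟩ (h.2.reflTransGen_src he))

end Walks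

section Paths

variable {N E : Type*} {src tgt : E → N} {s t : N}

theorem GPath.isWalk (P : GPath src tgt s t) : IsWalk src tgt s P.edges t :=
  (isWalk_iff_isChain P.ne).2 ⟨P.chain, P.first, P.last⟩

def GPath.ofWalk (hst : s ≠ t) {l : List E} (h : IsWalk src tgt s l t) : GPath src tgt s t where
  edges := l
  ne := h.ne_nil hst
  chain := ((isWalk_iff_isChain (h.ne_nil hst)).1 h).1
  first := ((isWalk_iff_isChain (h.ne_nil hst)).1 h).2.1
  last := ((isWalk_iff_isChain (h.ne_nil hst)).1 h).2.2

theorem GPath.edges_injective :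
    Function.Injective (GPath.edges : GPath src tgt s t → List E) := by
  rintro ⟨⟩ ⟨⟩ rfl
  rfl

theorem splitsAt_of_isWalk {P : GPath src tgt s t} {n : N} {a b : List E}
    (hP : P.edges = a ++ b) (hb : IsWalk src tgt n b t) : SplitsAt src tgt s t P n a b :=
  ⟨hP, fun h => ((isWalk_iff_isChain h).1 hb).2.1, fun h => by subst h; exact hb⟩

theorem wellFounded_of_forall_not_transGen {α : Type*} [Finite α] {r : α → α → Prop}
    (h : ∀ a, ¬ TransGen r a a) : WellFounded r :=
  haveI : Std.Irrefl (TransGen r) := ⟨h⟩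
  (Finite.wellFounded_of_trans_of_irrefl (TransGen r)).mono fun _ _ => TransGen.single

namespace IsDAG

variable (hdag : IsDAG src tgt s t)
include hdag

theorem nodup (P : GPath src tgt s t) : P.edges.Nodup :=
  P.isWalk.nodup hdag.1

theorem source_ne_sink (P : GPath src tgt s t) : s ≠ t :=
  fun h => hdag.2.2.1 _ (P.first.trans h)

theorem finite_gpath [Fintype E] : Finite (GPath src tgt s t) :=
  have : Finite {l : List E // l.length ≤ Fintype.card E} :=
    (List.finite_length_le E _).to_subtype
  Finite.of_injective (fun P : GPath src tgt s t =>
      (⟨P.edges, (hdag.nodup P).length_le_card⟩ : {l : List E // l.length ≤ Fintype.card E}))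
    fun _ _ h => GPath.edges_injective (congrArg Subtype.val h)

theorem exists_isWalk_from_source [Finite N] (n : N) : ∃ l, IsWalk src tgt s l n := by
  induction n using (wellFounded_of_forall_not_transGen hdag.1).induction with
  | _ n ih =>
  by_cases hin : ∃ e, tgt e = n
  · obtain ⟨e, rfl⟩ := hin
    obtain ⟨l, hl⟩ := ih (src e) ⟨e, rfl, rfl⟩
    exact ⟨l ++ [e], hl.append ⟨rfl, rfl⟩⟩
  · push Not at hin
    exact ⟨[], (hdag.2.2.2.1 n hin).symm⟩

theorem exists_isWalk_to_sink [Finite N] (n : N) : ∃ l, IsWalk src tgt n l t := by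
  have hacyc : ∀ a, ¬ TransGen (flip (Adj src tgt)) a a :=
    fun a h => hdag.1 a (transGen_swap.1 h)
  induction n using (wellFounded_of_forall_not_transGen hacyc).induction with
  | _ n ih =>
  by_cases hout : ∃ e, src e = n
  · obtain ⟨e, rfl⟩ := hout
    obtain ⟨l, hl⟩ := ih (tgt e) ⟨e, rfl, rfl⟩
    exact ⟨e :: l, rfl, hl⟩
  · push Not at hout
    exact ⟨[], hdag.2.2.2.2 n hout⟩

end IsDAG

end Paths

theorem sum_map_eq_sum_count {α M : Type*} [Fintype α] [DecidableEq α] [AddCommMonoid M]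
    (l : List α) (f : α → M) : (l.map f).sum = ∑ a, l.count a • f a := by
  rw [Finset.sum_list_map_count]
  refine Finset.sum_subset (Finset.subset_univ _) fun a _ ha => ?_
  rw [List.count_eq_zero_of_not_mem (by simpa using ha), zero_smul]

theorem exists_pos_smul_sum_eq_iff_mem_span {R V : Type*} [Ring R] [LinearOrder R]
    [IsStrictOrderedRing R] [AddCommGroup V] [Module R V] {S : Set V}
    (hS : ∀ x ∈ S, -x ∈ S) {v : V} :
    (∃ (m : ℕ) (c : Fin m → R) (x : Fin m → V), (∀ i, 0 < c i ∧ x i ∈ S) ∧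
      ∑ i, c i • x i = v) ↔ v ∈ Submodule.span R S := by
  constructor
  · rintro ⟨m, c, x, hcx, rfl⟩
    exact Submodule.sum_mem _ fun i _ => Submodule.smul_mem _ _ (Submodule.subset_span (hcx i).2)
  · intro hv
    obtain ⟨n, f, g, rfl⟩ := Submodule.mem_span_set'.1 hv
    -- `f • g = (max f 0 + 1) • g + (max (-f) 0 + 1) • (-g)`, with both coefficients positive
    refine ⟨n + n, Fin.append (fun i => max (f i) 0 + 1) (fun i => max (-f i) 0 + 1),
      Fin.append (fun i => (g i : V)) (fun i => -(g i : V)),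
      Fin.addCases (fun i => ?_) (fun i => ?_), ?_⟩
    · simp only [Fin.sum_univ_add, Fin.append_left, Fin.append_right, smul_neg,
        Finset.sum_neg_distrib, ← sub_eq_add_neg, ← Finset.sum_sub_distrib, ← sub_smul,
        max_zero_sub_max_neg_zero_eq_self, add_sub_add_right_eq_sub]
    · simp only [Fin.append_left]
      exact ⟨by positivity, (g i).2⟩
    · simp only [Fin.append_right]
      exact ⟨by positivity, hS _ (g i).2⟩

section EdgeLoad

variable {N E : Type*} {src tgt : E → N} {s t : N}

theorem isRyserSwap_neg {R : GPath src tgt s t → ℝ} (hR : IsRyserSwap src tgt s t R) :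
    IsRyserSwap src tgt s t (-R) := by
  obtain ⟨n, P₁, P₂, Q₁, Q₂, ⟨a₁, b₁, a₂, b₂, h₁, h₂, hQ₁, hQ₂⟩, rfl⟩ := hR
  exact ⟨n, Q₁, Q₂, P₁, P₂, ⟨a₁, b₂, a₂, b₁, ⟨hQ₁, h₂.2⟩, ⟨hQ₂, h₁.2⟩, h₁.1, h₂.1⟩, by abel⟩

theorem sum_smul_indP [Fintype (GPath src tgt s t)] (w : GPath src tgt s t → ℝ) :
    ∑ P, w P • indP src tgt s t P = w := by
  ext Q
  simp [indP]

variable [DecidableEq E]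

variable (src tgt s t) in
def edgeLoad [Fintype (GPath src tgt s t)] : (GPath src tgt s t → ℝ) →ₗ[ℝ] E → ℝ where
  toFun w e := ∑ P, w P * P.edges.count e
  map_add' w w' := by ext e; simp [add_mul, Finset.sum_add_distrib]
  map_smul' c w := by ext e; simp [Finset.mul_sum, mul_assoc]

variable [Fintype (GPath src tgt s t)]

theorem edgeLoad_apply (w : GPath src tgt s t → ℝ) (e : E) :
    edgeLoad src tgt s t w e = ∑ P, w P * P.edges.count e :=
  rfl

theorem edgeLoad_indP (P₀ : GPath src tgt s t) (e : E) :
    edgeLoad src tgt s t (indP src tgt s t P₀) e = P₀.edges.count e := by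
  simp [edgeLoad_apply, indP]

theorem ryserSub_le_ker_edgeLoad :
    RyserSub src tgt s t ≤ LinearMap.ker (edgeLoad src tgt s t) := by
  refine Submodule.span_le.2 ?_
  rintro _ ⟨n, P₁, P₂, Q₁, Q₂, ⟨a₁, b₁, a₂, b₂, h₁, h₂, hQ₁, hQ₂⟩, rfl⟩
  refine LinearMap.mem_ker.2 (funext fun e => ?_)
  simp only [map_sub, map_add, Pi.sub_apply, Pi.add_apply,
    edgeLoad_indP, h₁.1, h₂.1, hQ₁, hQ₂, List.count_append, Nat.cast_add, Pi.zero_apply]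
  ring

theorem isPathDecomp_iff (hnd : ∀ P : GPath src tgt s t, P.edges.Nodup) {f : E → ℝ}
    {π : GPath src tgt s t → ℝ} :
    IsPathDecomp src tgt s t f π ↔ (∀ P, 0 ≤ π P) ∧ f = edgeLoad src tgt s t π := by
  have hterm : ∀ e P, (if e ∈ P.edges then π P else 0) = π P * P.edges.count e := by
    intro e P
    split_ifs with he
    · simp [List.count_eq_one_of_mem (hnd P) he]
    · simp [List.count_eq_zero_of_not_mem he]
  simp only [IsPathDecomp, finsum_eq_sum_of_fintype, hterm, funext_iff, edgeLoad_apply]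

variable [Fintype E]

theorem sum_edgeLoad_mul_sub (w : GPath src tgt s t → ℝ) (g : N → ℝ) :
    ∑ e, edgeLoad src tgt s t w e * (g (tgt e) - g (src e)) = (∑ P, w P) * (g t - g s) := by
  have hpath : ∀ P : GPath src tgt s t,
      ∑ e, (P.edges.count e : ℝ) * (g (tgt e) - g (src e)) = g t - g s := by
    intro P
    simp only [← P.isWalk.sum_map_sub g, sum_map_eq_sum_count, nsmul_eq_mul]
  simp only [edgeLoad_apply, Finset.sum_mul, mul_assoc]
  rw [Finset.sum_comm]
  simp only [← Finset.mul_sum, hpath]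

theorem isQuasiFlow_edgeLoad [DecidableEq N] {w : GPath src tgt s t → ℝ} (hw : ∀ P, 0 ≤ w P) :
    IsQuasiFlow src tgt s t (edgeLoad src tgt s t w) := by
  refine ⟨fun e => Finset.sum_nonneg fun P _ => mul_nonneg (hw P) (Nat.cast_nonneg _),
    fun n hns hnt => ?_⟩
  have := sum_edgeLoad_mul_sub w fun m => if m = n then (1 : ℝ) else 0
  simpa [hns.symm, hnt.symm, mul_sub, Finset.sum_sub_distrib, sub_eq_zero] using this

end EdgeLoad

section Spanning

variable {N E : Type*} {src tgt : E → N} {s t : N}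

noncomputable def indOfEdges (l : List E) : GPath src tgt s t → ℝ :=
  fun P => if P.edges = l then 1 else 0

theorem indP_eq_indOfEdges (P : GPath src tgt s t) : indP src tgt s t P = indOfEdges P.edges := by
  ext Q
  simp only [indP, indOfEdges, GPath.edges_injective.eq_iff]

theorem isRyserSwap_indOfEdges (hst : s ≠ t) {n : N} {a₁ b₁ a₂ b₂ : List E}
    (ha₁ : IsWalk src tgt s a₁ n) (hb₁ : IsWalk src tgt n b₁ t)
    (ha₂ : IsWalk src tgt s a₂ n) (hb₂ : IsWalk src tgt n b₂ t) :
    IsRyserSwap src tgt s t (indOfEdges (a₁ ++ b₂) + indOfEdges (a₂ ++ b₁) -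
      indOfEdges (a₁ ++ b₁) - indOfEdges (a₂ ++ b₂)) :=
  ⟨n, .ofWalk hst (ha₁.append hb₁), .ofWalk hst (ha₂.append hb₂),
    .ofWalk hst (ha₁.append hb₂), .ofWalk hst (ha₂.append hb₁),
    ⟨a₁, b₁, a₂, b₂, splitsAt_of_isWalk rfl hb₁, splitsAt_of_isWalk rfl hb₂, rfl, rfl⟩,
    by simp only [indP_eq_indOfEdges]; rfl⟩

variable (s t) (pre suf : N → List E)

noncomputable def edgeVector (e : E) : GPath src tgt s t → ℝ :=
  indOfEdges (pre (src e) ++ e :: suf (tgt e)) - indOfEdges (pre (tgt e) ++ suf (tgt e))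

variable {s t pre suf} (hst : s ≠ t) (hpre : ∀ n, IsWalk src tgt s (pre n) n)
  (hsuf : ∀ n, IsWalk src tgt n (suf n) t)
include hst hpre hsuf

theorem indOfEdges_sub_sum_edgeVector_mem {n : N} {b : List E} (hb : IsWalk src tgt n b t) :
    indOfEdges (pre n ++ b) - indOfEdges (pre t) - (b.map (edgeVector s t pre suf)).sum ∈
      RyserSub src tgt s t := by
  induction b generalizing n with
  | nil =>
    obtain rfl : n = t := hb
    simp
  | cons e b ih =>
    obtain ⟨rfl, hb⟩ := hb
    have he : IsWalk src tgt (src e) [e] (tgt e) := ⟨rfl, rfl⟩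
    have hswap := isRyserSwap_indOfEdges hst ((hpre (src e)).append he) hb (hpre (tgt e))
      (hsuf (tgt e))
    convert Submodule.sub_mem _ (ih hb) (Submodule.subset_span hswap) using 1
    simp only [edgeVector, List.map_cons, List.sum_cons, List.append_assoc, List.singleton_append]
    abel

theorem ker_edgeLoad_le_ryserSub [DecidableEq E] [Fintype E] [Fintype (GPath src tgt s t)]
    (hs : pre s = []) : LinearMap.ker (edgeLoad src tgt s t) ≤ RyserSub src tgt s t := by
  intro δ hδ
  rw [LinearMap.mem_ker] at hδ
  set base : GPath src tgt s t → ℝ := indOfEdges (pre t)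
  set L : GPath src tgt s t → GPath src tgt s t → ℝ :=
    fun P => (P.edges.map (edgeVector s t pre suf)).sum
  have hmass : ∑ P, δ P = 0 := by
    simpa [hδ, hst.symm] using sum_edgeLoad_mul_sub δ fun m => if m = s then (1 : ℝ) else 0
  have hL : ∑ P, δ P • L P = 0 := by
    simp only [L, sum_map_eq_sum_count, ← Nat.cast_smul_eq_nsmul ℝ, Finset.smul_sum, smul_smul]
    rw [Finset.sum_comm]
    simp only [← Finset.sum_smul, ← edgeLoad_apply, hδ, Pi.zero_apply, zero_smul,
      Finset.sum_const_zero]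
  have hdecomp : δ = ∑ P, δ P • (indP src tgt s t P - base - L P) + (∑ P, δ P) • base +
      ∑ P, δ P • L P := by
    simp only [smul_sub, Finset.sum_sub_distrib, Finset.sum_smul, sum_smul_indP]
    abel
  rw [hdecomp, hmass, hL, zero_smul, add_zero, add_zero]
  refine Submodule.sum_smul_mem _ _ fun P _ => ?_
  simpa [indP_eq_indOfEdges, hs] using indOfEdges_sub_sum_edgeVector_mem hst hpre hsuf P.isWalk

end Spanning

theorem IsDAG.ryserSub_eq_ker_edgeLoad {N E : Type*} [Finite N] [Fintype E] [DecidableEq E]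
    {src tgt : E → N} {s t : N} [Fintype (GPath src tgt s t)] (hdag : IsDAG src tgt s t) :
    RyserSub src tgt s t = LinearMap.ker (edgeLoad src tgt s t) := by
  refine le_antisymm ryserSub_le_ker_edgeLoad ?_
  cases isEmpty_or_nonempty (GPath src tgt s t) with
  | inl _ => exact fun δ _ => Subsingleton.elim 0 δ ▸ Submodule.zero_mem _
  | inr hne =>
    choose pre hpre using hdag.exists_isWalk_from_source
    choose suf hsuf using hdag.exists_isWalk_to_sink
    exact ker_edgeLoad_le_ryserSub (hdag.source_ne_sink hne.some) hpre hsuf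
      ((hpre s).eq_nil hdag.2.1)

variable {N E : Type*} [Fintype N] [Fintype E] [DecidableEq N] [DecidableEq E]

variable (src tgt : E → N) (s t : N)

theorem statement12 (hdag : IsDAG src tgt s t)
    (π π' : GPath src tgt s t → ℝ)
    (hπ : IsDistP src tgt s t π) (hπ' : IsDistP src tgt s t π') :
    (∃ f : E → ℝ, IsQuasiFlow src tgt s t f ∧
        IsPathDecomp src tgt s t f π ∧ IsPathDecomp src tgt s t f π') ↔
      (∃ (m : ℕ) (c : Fin m → ℝ) (R : Fin m → (GPath src tgt s t → ℝ)),
        (∀ i, 0 < c i ∧ IsRyserSwap src tgt s t (R i)) ∧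
        π + ∑ i, c i • R i = π') := by
  have := hdag.finite_gpath
  let : Fintype (GPath src tgt s t) := Fintype.ofFinite _
  have hRyser : (∃ (m : ℕ) (c : Fin m → ℝ) (R : Fin m → (GPath src tgt s t → ℝ)),
      (∀ i, 0 < c i ∧ IsRyserSwap src tgt s t (R i)) ∧ π + ∑ i, c i • R i = π') ↔
      edgeLoad src tgt s t π' = edgeLoad src tgt s t π := by
    simp only [← eq_sub_iff_add_eq']
    refine (exists_pos_smul_sum_eq_iff_mem_span (S := {R | IsRyserSwap src tgt s t R})
      fun _ => isRyserSwap_neg).trans ?_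
    rw [← RyserSub, hdag.ryserSub_eq_ker_edgeLoad, LinearMap.mem_ker, map_sub, sub_eq_zero]
  rw [hRyser]
  simp only [isPathDecomp_iff hdag.nodup]
  constructor
  · rintro ⟨f, -, ⟨-, rfl⟩, -, hf⟩
    exact hf.symm
  · intro hload
    exact ⟨_, isQuasiFlow_edgeLoad hπ.1, ⟨hπ.1, rfl⟩, hπ'.1, hload.symm⟩

end StmtDAG
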